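/- arXiv:2407.18954 — 2 statements merged into one kernel-verified Lean document; each statement's English description precedes it below -/
import Mathlib

section
/- A ≤⋄ B if and only if B† B A† A = A† B A† A = A† A and A A† B B† = A A† B A† = A A†. -/
open Matrix

/-- Column space (range) of a complex matrix. -/
noncomputable def mrange {m n : Type*} [Fintype n] (A : Matrix m n ℂ) : Submodule ℂ (m → ℂ) :=
  LinearMap.range A.mulVecLin

/-- The diamond partial order on rectangular complex matrices. -/
def diamondLE {m n : Type*} [Fintype m] [Fintype n] (A B : Matrix m n ℂ) : Prop :=
  mrange A ≤ mrange B ∧ mrange Aᴴ ≤ mrange Bᴴ ∧ A * Bᴴ * A = A * Aᴴ * A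

/-- `X` satisfies the four Penrose equations for `A`. -/
def IsMP {m n : Type*} [Fintype m] [Fintype n] (A : Matrix m n ℂ) (X : Matrix n m ℂ) : Prop :=
  A * X * A = A ∧ X * A * X = X ∧ (A * X)ᴴ = A * X ∧ (X * A)ᴴ = X * A

namespace Matrix

variable {m n : Type*} [Fintype m] [Fintype n] {α : Type*}

section Semiring

variable [Semiring α] {A : Matrix m n α} {X : Matrix n m α}

theorem mul_eq_self_iff_of_mul_mul_self (hA : A * X * A = A) (P : Matrix n n α) :
    A * P = A ↔ X * A * P = X * A := by
  refine ⟨fun h ↦ by rw [Matrix.mul_assoc, h], fun h ↦ ?_⟩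
  calc A * P = A * (X * A * P) := by rw [← Matrix.mul_assoc, ← Matrix.mul_assoc, hA]
    _ = A := by rw [h, ← Matrix.mul_assoc, hA]

theorem self_mul_eq_self_iff_of_mul_mul_self (hA : A * X * A = A) (P : Matrix m m α) :
    P * A = A ↔ P * (A * X) = A * X := by
  refine ⟨fun h ↦ by rw [← Matrix.mul_assoc, h], fun h ↦ ?_⟩
  calc P * A = P * (A * X) * A := by rw [Matrix.mul_assoc P, hA]
    _ = A := by rw [h, hA]

end Semiring

theorem IsHermitian.mul_eq_self_comm [Semiring α] [StarRing α] {P Q : Matrix n n α}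
    (hP : P.IsHermitian) (hQ : Q.IsHermitian) : Q * P = Q ↔ P * Q = Q := by
  rw [← conjTranspose_inj, conjTranspose_mul, hP.eq, hQ.eq]

end Matrix

section Range

variable {k m n : Type*} [Fintype k] [Fintype m] [Fintype n]

theorem mrange_le_iff {A : Matrix m k ℂ} {B : Matrix m n ℂ} {Y : Matrix n m ℂ}
    (hB : B * Y * B = B) : mrange A ≤ mrange B ↔ B * Y * A = A := by
  refine ⟨fun h ↦ ?_, fun h ↦ ?_⟩
  · rw [ext_iff_mulVec]
    intro v
    obtain ⟨w, hw⟩ := h (LinearMap.mem_range_self A.mulVecLin v)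
    simp only [mulVecLin_apply] at hw
    rw [← mulVec_mulVec, ← hw, mulVec_mulVec, hB]
  · rw [← h, mrange, mrange, Matrix.mul_assoc, mulVecLin_mul]
    exact LinearMap.range_comp_le_range _ _

theorem mrange_conjTranspose_le_iff {A : Matrix k m ℂ} {B : Matrix n m ℂ} {Y : Matrix m n ℂ}
    (hB : B * Y * B = B) : mrange Aᴴ ≤ mrange Bᴴ ↔ A * Y * B = A := by
  have hBH : Bᴴ * Yᴴ * Bᴴ = Bᴴ := by
    rw [← conjTranspose_mul, ← conjTranspose_mul, ← Matrix.mul_assoc, hB]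
  rw [mrange_le_iff hBH, ← conjTranspose_mul, ← conjTranspose_mul, conjTranspose_inj,
    Matrix.mul_assoc]

end Range

namespace IsMP

variable {m n : Type*} [Fintype m] [Fintype n] {A : Matrix m n ℂ} {X : Matrix n m ℂ}

theorem conjTranspose_mul_self_mul (h : IsMP A X) : Aᴴ * A * X = Aᴴ := by
  rw [Matrix.mul_assoc, ← h.2.2.1, ← conjTranspose_mul, h.1]

theorem mul_self_mul_conjTranspose (h : IsMP A X) : X * A * Aᴴ = Aᴴ := by
  rw [← h.2.2.2, ← conjTranspose_mul, ← Matrix.mul_assoc, h.1]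

theorem mul_conjTranspose_mul_conjTranspose (h : IsMP A X) : X * Xᴴ * Aᴴ = X := by
  rw [Matrix.mul_assoc, ← conjTranspose_mul, h.2.2.1, ← Matrix.mul_assoc, h.2.1]

theorem conjTranspose_mul_conjTranspose_mul (h : IsMP A X) : Aᴴ * Xᴴ * X = X := by
  rw [← conjTranspose_mul, h.2.2.2, h.2.1]

theorem mul_mul_eq_self_iff (h : IsMP A X) (C : Matrix m n ℂ) :
    X * C * X = X ↔ Aᴴ * C * Aᴴ = Aᴴ * A * Aᴴ := by
  have hX (C : Matrix m n ℂ) : X * Xᴴ * (Aᴴ * C * Aᴴ) * (Xᴴ * X) = X * C * X := by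
    simp only [← Matrix.mul_assoc, h.mul_conjTranspose_mul_conjTranspose]
    simp only [Matrix.mul_assoc, h.conjTranspose_mul_conjTranspose_mul]
  have hA (C : Matrix m n ℂ) : Aᴴ * A * (X * C * X) * (A * Aᴴ) = Aᴴ * C * Aᴴ := by
    simp only [← Matrix.mul_assoc, h.conjTranspose_mul_self_mul]
    simp only [Matrix.mul_assoc, h.mul_self_mul_conjTranspose]
  constructor
  · intro hC
    rw [← hA C, hC, ← hA A, h.2.1]
  · intro hC
    rw [← hX C, hC, hX A, h.2.1]

theorem mul_conjTranspose_mul_eq_iff (h : IsMP A X) (B : Matrix m n ℂ) :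
    A * Bᴴ * A = A * Aᴴ * A ↔ X * B * X = X := by
  rw [h.mul_mul_eq_self_iff, ← conjTranspose_inj]
  simp only [conjTranspose_mul, conjTranspose_conjTranspose, Matrix.mul_assoc]

theorem mul_mul_mul_eq_iff (h : IsMP A X) (C : Matrix m n ℂ) :
    A * X * (C * X) = A * X ↔ X * C * X = X := by
  constructor
  · intro hC
    calc X * C * X = X * (A * X * (C * X)) := by simp only [← Matrix.mul_assoc, h.2.1]
      _ = X := by rw [hC, ← Matrix.mul_assoc, h.2.1]
  · intro hC
    rw [Matrix.mul_assoc, ← Matrix.mul_assoc X, hC]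

end IsMP

theorem stmt14 {m n : ℕ} (A B : Matrix (Fin m) (Fin n) ℂ) (Ad Bd : Matrix (Fin n) (Fin m) ℂ)
    (hAd : IsMP A Ad) (hBd : IsMP B Bd) :
    diamondLE A B ↔
      (Bd * B * (Ad * A) = Ad * B * (Ad * A) ∧ Ad * B * (Ad * A) = Ad * A ∧
       A * Ad * (B * Bd) = A * Ad * (B * Ad) ∧ A * Ad * (B * Ad) = A * Ad) := by
  have hRow : A * Bd * B = A ↔ Bd * B * (Ad * A) = Ad * A := by
    rw [Matrix.mul_assoc, mul_eq_self_iff_of_mul_mul_self hAd.1,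
      IsHermitian.mul_eq_self_comm hBd.2.2.2 hAd.2.2.2]
  have hCol : B * Bd * A = A ↔ A * Ad * (B * Bd) = A * Ad := by
    rw [self_mul_eq_self_iff_of_mul_mul_self hAd.1,
      IsHermitian.mul_eq_self_comm hBd.2.2.1 hAd.2.2.1]
  rw [diamondLE, mrange_le_iff hBd.1, mrange_conjTranspose_le_iff hBd.1, hRow, hCol,
    hAd.mul_conjTranspose_mul_eq_iff, ← hAd.mul_mul_mul_eq_iff]
  have hMid : A * Ad * (B * Ad) = A * Ad → Ad * B * (Ad * A) = Ad * A := fun h ↦ by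
    rw [← Matrix.mul_assoc, (hAd.mul_mul_mul_eq_iff B).1 h]
  constructor
  · rintro ⟨hBBd, hBdB, hCore⟩
    exact ⟨hBdB.trans (hMid hCore).symm, hMid hCore, hBBd.trans hCore.symm, hCore⟩
  · rintro ⟨h₁, h₂, h₃, h₄⟩
    exact ⟨h₃.trans h₄, h₁.trans h₂, h₄⟩
end

section
/- Let B be an m×n matrix of the form B = U · diag(D_b, 0) · V* with U, V unitary and D_b a b×b positive definite diagonal matrix. If A ≤⋄ B, then A = U · diag(T, 0) · V* for some b×b matrix T with T ≤⋄ D_b. -/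
/-!
The diamond order is preserved by `X ↦ P * X * Q` whenever `Pᴴ * P = 1` and `Q * Qᴴ = 1`, so
conjugating by `Uᴴ` and `V` reduces the claim to `B = diag(D, 0)`. The two range inclusions then
force `Uᴴ * A * V` to vanish outside its top-left block `T`, and all three conditions defining
`A ≤⋄ B` restrict to that block.
-/

open Matrix

theorem mul_mul_mul_cancel_of_mul_eq_one {m m' n n' : Type*} [Fintype m] [Fintype m']
    [Fintype n] [Fintype n'] [DecidableEq m] [DecidableEq n] {P : Matrix m' m ℂ}
    {P' : Matrix m m' ℂ} {Q : Matrix n n' ℂ} {Q' : Matrix n' n ℂ} (hP : P' * P = 1)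
    (hQ : Q * Q' = 1) (X : Matrix m n ℂ) : P' * (P * X * Q) * Q' = X := by
  rw [← Matrix.mul_assoc, ← Matrix.mul_assoc, hP, Matrix.one_mul, Matrix.mul_assoc, hQ,
    Matrix.mul_one]

theorem mrange_mul_le {m n k : Type*} [Fintype n] [Fintype k] (A : Matrix m n ℂ)
    (X : Matrix n k ℂ) : mrange (A * X) ≤ mrange A := by
  rw [mrange, mrange, Matrix.mulVecLin_mul]
  exact LinearMap.range_comp_le_range _ _

theorem mrange_mul_le_mul_left {l m n : Type*} [Fintype m] [Fintype n] (P : Matrix l m ℂ)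
    {A B : Matrix m n ℂ} (h : mrange A ≤ mrange B) : mrange (P * A) ≤ mrange (P * B) := by
  simp only [mrange, Matrix.mulVecLin_mul, LinearMap.range_comp]
  exact Submodule.map_mono h

theorem mrange_mul_of_mul_eq_one {m n k : Type*} [Fintype n] [Fintype k] [DecidableEq n]
    (A : Matrix m n ℂ) {X : Matrix n k ℂ} {Y : Matrix k n ℂ} (hXY : X * Y = 1) :
    mrange (A * X) = mrange A := by
  refine le_antisymm (mrange_mul_le A X) ?_
  calc mrange A = mrange (A * X * Y) := by rw [Matrix.mul_assoc, hXY, Matrix.mul_one]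
    _ ≤ mrange (A * X) := mrange_mul_le _ _

theorem mrange_mul_mul_le_mul_mul {l m n k : Type*} [Fintype m] [Fintype n] [Fintype k]
    [DecidableEq n] (P : Matrix l m ℂ) {Q : Matrix n k ℂ} {Q' : Matrix k n ℂ} (hQ : Q * Q' = 1)
    {A B : Matrix m n ℂ} (h : mrange A ≤ mrange B) :
    mrange (P * A * Q) ≤ mrange (P * B * Q) := by
  rw [mrange_mul_of_mul_eq_one _ hQ, mrange_mul_of_mul_eq_one _ hQ]
  exact mrange_mul_le_mul_left P h

theorem diamondLE.mul_mul {m m' n n' : Type*} [Fintype m] [Fintype m'] [Fintype n] [Fintype n']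
    [DecidableEq m] [DecidableEq n] {P : Matrix m' m ℂ} {Q : Matrix n n' ℂ}
    (hP : Pᴴ * P = 1) (hQ : Q * Qᴴ = 1) {A B : Matrix m n ℂ} (h : diamondLE A B) :
    diamondLE (P * A * Q) (P * B * Q) := by
  obtain ⟨hAB, hAB', hmid⟩ := h
  refine ⟨mrange_mul_mul_le_mul_mul P hQ hAB, ?_, ?_⟩
  · simpa only [conjTranspose_mul, Matrix.mul_assoc] using mrange_mul_mul_le_mul_mul Qᴴ hP hAB'
  · calc P * A * Q * (P * B * Q)ᴴ * (P * A * Q)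
        = P * (A * (Q * Qᴴ) * Bᴴ * (Pᴴ * P) * A) * Q := by
          simp only [conjTranspose_mul, Matrix.mul_assoc]
      _ = P * (A * (Q * Qᴴ) * Aᴴ * (Pᴴ * P) * A) * Q := by
          simp only [hP, hQ, Matrix.mul_one, hmid]
      _ = P * A * Q * (P * A * Q)ᴴ * (P * A * Q) := by
          simp only [conjTranspose_mul, Matrix.mul_assoc]

theorem apply_inr_eq_zero_of_mrange_le_fromBlocks {m₁ m₂ n₁ n₂ : Type*} [Fintype n₁]
    [Fintype n₂] [DecidableEq n₁] [DecidableEq n₂]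
    {C : Matrix (m₁ ⊕ m₂) (n₁ ⊕ n₂) ℂ} {D : Matrix m₁ n₁ ℂ}
    (h : mrange C ≤ mrange (fromBlocks D 0 0 0 : Matrix (m₁ ⊕ m₂) (n₁ ⊕ n₂) ℂ))
    (i : m₂) (j : n₁ ⊕ n₂) : C (Sum.inr i) j = 0 := by
  obtain ⟨y, hy⟩ := h ⟨Pi.single j 1, rfl⟩
  simpa [fromBlocks_mulVec] using (congrFun hy (Sum.inr i)).symm

theorem mrange_le_of_mrange_fromBlocks_le {m₁ m₂ n₁ n₂ : Type*} [Fintype n₁] [Fintype n₂]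
    {T D : Matrix m₁ n₁ ℂ}
    (h : mrange (fromBlocks T 0 0 0 : Matrix (m₁ ⊕ m₂) (n₁ ⊕ n₂) ℂ) ≤
      mrange (fromBlocks D 0 0 0 : Matrix (m₁ ⊕ m₂) (n₁ ⊕ n₂) ℂ)) :
    mrange T ≤ mrange D := by
  rintro _ ⟨v, rfl⟩
  obtain ⟨y, hy⟩ := h ⟨Sum.elim v 0, rfl⟩
  refine ⟨y ∘ Sum.inl, funext fun i => ?_⟩
  simpa [fromBlocks_mulVec] using congrFun hy (Sum.inl i)

theorem eq_fromBlocks_toBlocks₁₁ {m₁ m₂ n₁ n₂ : Type*} {C : Matrix (m₁ ⊕ m₂) (n₁ ⊕ n₂) ℂ}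
    (hrow : ∀ i j, C (Sum.inr i) j = 0) (hcol : ∀ i j, C i (Sum.inr j) = 0) :
    C = fromBlocks C.toBlocks₁₁ 0 0 0 := by
  ext (i | i) (j | j)
  · rfl
  · exact hcol _ _
  · exact hrow _ _
  · exact hrow _ _

theorem diamondLE.eq_fromBlocks_and_diamondLE_toBlocks₁₁ {m₁ m₂ n₁ n₂ : Type*} [Fintype m₁]
    [Fintype m₂] [Fintype n₁] [Fintype n₂] [DecidableEq m₁] [DecidableEq m₂]
    [DecidableEq n₁] [DecidableEq n₂] {C : Matrix (m₁ ⊕ m₂) (n₁ ⊕ n₂) ℂ} {D : Matrix m₁ n₁ ℂ}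
    (h : diamondLE C (fromBlocks D 0 0 0)) :
    C = fromBlocks C.toBlocks₁₁ 0 0 0 ∧ diamondLE C.toBlocks₁₁ D := by
  obtain ⟨hCD, hCD', hmid⟩ := h
  have hDH : (fromBlocks D 0 0 0 : Matrix (m₁ ⊕ m₂) (n₁ ⊕ n₂) ℂ)ᴴ = fromBlocks Dᴴ 0 0 0 := by
    simp [fromBlocks_conjTranspose]
  rw [hDH] at hCD' hmid
  have hC : C = fromBlocks C.toBlocks₁₁ 0 0 0 := by
    refine eq_fromBlocks_toBlocks₁₁ (apply_inr_eq_zero_of_mrange_le_fromBlocks hCD) fun i j => ?_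
    simpa using congrArg star (apply_inr_eq_zero_of_mrange_le_fromBlocks hCD' j i)
  set T := C.toBlocks₁₁
  have hTH : Cᴴ = fromBlocks Tᴴ 0 0 0 := by
    rw [hC]; simp [fromBlocks_conjTranspose]
  rw [hTH] at hCD' hmid
  rw [hC] at hCD hmid
  refine ⟨hC, mrange_le_of_mrange_fromBlocks_le hCD, mrange_le_of_mrange_fromBlocks_le hCD', ?_⟩
  simpa [fromBlocks_multiply] using congrArg toBlocks₁₁ hmid

theorem stmt18_general {b p q : ℕ}
    (U : Matrix (Fin b ⊕ Fin p) (Fin b ⊕ Fin p) ℂ)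
    (V : Matrix (Fin b ⊕ Fin q) (Fin b ⊕ Fin q) ℂ)
    (hU : U ∈ Matrix.unitaryGroup (Fin b ⊕ Fin p) ℂ)
    (hV : V ∈ Matrix.unitaryGroup (Fin b ⊕ Fin q) ℂ)
    (D : Matrix (Fin b) (Fin b) ℂ)
    (A B : Matrix (Fin b ⊕ Fin p) (Fin b ⊕ Fin q) ℂ)
    (hB : B = U * (Matrix.fromBlocks D 0 0 0 : Matrix (Fin b ⊕ Fin p) (Fin b ⊕ Fin q) ℂ) * Vᴴ)
    (h : diamondLE A B) :
    ∃ T : Matrix (Fin b) (Fin b) ℂ,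
      A = U * (Matrix.fromBlocks T 0 0 0 : Matrix (Fin b ⊕ Fin p) (Fin b ⊕ Fin q) ℂ) * Vᴴ ∧
      diamondLE T D := by
  have hUUh : U * Uᴴ = 1 := mem_unitaryGroup_iff.mp hU
  have hUhU : Uᴴ * U = 1 := mem_unitaryGroup_iff'.mp hU
  have hVVh : V * Vᴴ = 1 := mem_unitaryGroup_iff.mp hV
  have hVhV : Vᴴ * V = 1 := mem_unitaryGroup_iff'.mp hV
  have hC : diamondLE (Uᴴ * A * V) (fromBlocks D 0 0 0) := by
    have := h.mul_mul (P := Uᴴ) (by rwa [conjTranspose_conjTranspose]) hVVh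
    rwa [hB, mul_mul_mul_cancel_of_mul_eq_one hUhU hVhV] at this
  obtain ⟨hblock, hT⟩ := hC.eq_fromBlocks_and_diamondLE_toBlocks₁₁
  exact ⟨_, by rw [← hblock, mul_mul_mul_cancel_of_mul_eq_one hUUh hVVh], hT⟩

theorem stmt18 {b p q : ℕ}
    (U : Matrix (Fin b ⊕ Fin p) (Fin b ⊕ Fin p) ℂ)
    (V : Matrix (Fin b ⊕ Fin q) (Fin b ⊕ Fin q) ℂ)
    (hU : U ∈ Matrix.unitaryGroup (Fin b ⊕ Fin p) ℂ)
    (hV : V ∈ Matrix.unitaryGroup (Fin b ⊕ Fin q) ℂ)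
    (D : Matrix (Fin b) (Fin b) ℂ) (d : Fin b → ℝ)
    (hDdiag : D = Matrix.diagonal (fun i => (d i : ℂ)))
    (hDpos : ∀ i, 0 < d i)
    (A B : Matrix (Fin b ⊕ Fin p) (Fin b ⊕ Fin q) ℂ)
    (hB : B = U * (Matrix.fromBlocks D 0 0 0 : Matrix (Fin b ⊕ Fin p) (Fin b ⊕ Fin q) ℂ) * Vᴴ)
    (h : diamondLE A B) :
    ∃ T : Matrix (Fin b) (Fin b) ℂ,
      A = U * (Matrix.fromBlocks T 0 0 0 : Matrix (Fin b ⊕ Fin p) (Fin b ⊕ Fin q) ℂ) * Vᴴ ∧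
      diamondLE T D :=
  stmt18_general U V hU hV D A B hB h
end
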